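/- arXiv:1105.0108 — 3 statements merged into one kernel-verified Lean document; each statement's English description precedes it below -/
import Mathlib

section
/- For all natural numbers $p$ and all integers $\gamma, \beta$ with $0 \le \gamma \le \beta \le p$, one has $\sum_{m=\gamma}^{\beta} \binom{-p-1}{m}\binom{p+\beta}{\beta-m}\binom{m}{\gamma} = \begin{cases} \binom{-p-1}{\beta} & \text{if } \gamma = \beta \\ 0 & \text{if } \gamma < \beta,\end{cases}$ where binomial coefficients with negative top argument are generalized binomial coefficients. -/
/-!
Trinomial revision `C(r, m) C(m, γ) = C(r, γ) C(r - γ, m - γ)` pulls `C(-p-1, γ)` out of the sum,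
and what remains is a Chu–Vandermonde convolution equal to `C(-p-1-γ + p+β, β-γ) = C(β-γ-1, β-γ)`.
This is `C(-1, 0) = 1` when `γ = β`, and a binomial coefficient of a natural number below its
lower index, hence `0`, when `γ < β`.
-/

open Finset

/-- Generalized binomial coefficient `x(x-1)⋯(x-k+1)/k!` for `x : ℚ`. -/
noncomputable def gbinom (x : ℚ) (k : ℕ) : ℚ :=
  (∏ i ∈ Finset.range k, (x - i)) / (Nat.factorial k)

lemma gbinom_eq_choose (x : ℚ) (k : ℕ) : gbinom x k = Ring.choose x k := by
  rw [Ring.choose_eq_smul, ← Polynomial.aeval_eq_smeval, Polynomial.aeval_def,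
    ← Polynomial.eval_map, descPochhammer_map, descPochhammer_eval_eq_prod_range, gbinom,
    smul_eq_mul, div_eq_inv_mul]

lemma Finset.sum_Icc_sub_eq_sum_antidiagonal {M : Type*} [AddCommMonoid M] (f : ℕ → ℕ → M)
    {k n : ℕ} (hkn : k ≤ n) :
    ∑ m ∈ Icc k n, f (m - k) (n - m) = ∑ ij ∈ antidiagonal (n - k), f ij.1 ij.2 := by
  refine sum_nbij' (fun m ↦ (m - k, n - m)) (fun ij ↦ ij.1 + k) ?_ ?_ ?_ ?_ fun _ _ ↦ rfl <;>
    simp only [mem_Icc, HasAntidiagonal.mem_antidiagonal, Prod.forall, Prod.ext_iff] <;>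
    intros <;> omega

theorem Ring.sum_choose_mul_choose_mul_choose {R : Type*} [CommRing R] [BinomialRing R]
    (r s : R) {k n : ℕ} (hkn : k ≤ n) :
    ∑ m ∈ Icc k n, choose r m * choose s (n - m) * (m.choose k : R)
      = choose r k * choose (r - k + s) (n - k) := by
  calc ∑ m ∈ Icc k n, choose r m * choose s (n - m) * (m.choose k : R)
      = ∑ m ∈ Icc k n, choose r k * (choose (r - k) (m - k) * choose s (n - m)) := by
        refine sum_congr rfl fun m hm ↦ ?_
        have hrev := choose_smul_choose r (mem_Icc.mp hm).1
        rw [nsmul_eq_mul] at hrev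
        linear_combination choose s (n - m) * hrev
    _ = choose r k * ∑ ij ∈ antidiagonal (n - k), choose (r - k) ij.1 * choose s ij.2 := by
        rw [← mul_sum,
          sum_Icc_sub_eq_sum_antidiagonal (fun i j ↦ choose (r - k) i * choose s j) hkn]
    _ = choose r k * choose (r - k + s) (n - k) := by
        rw [add_choose_eq _ (Commute.all _ _)]

theorem stmt3_general (p γ β : ℕ) (hγβ : γ ≤ β) :
    ∑ m ∈ Finset.Icc γ β,
      gbinom (-(p : ℚ) - 1) m * gbinom ((p : ℚ) + β) (β - m) * gbinom (m : ℚ) γ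
      = if γ = β then gbinom (-(p : ℚ) - 1) β else 0 := by
  simp only [gbinom_eq_choose, Ring.choose_natCast]
  rw [Ring.sum_choose_mul_choose_mul_choose _ _ hγβ,
    show -(p : ℚ) - 1 - γ + (p + β) = β - γ - 1 by ring]
  split_ifs with hγ
  · subst hγ
    simp
  · obtain ⟨d, rfl⟩ := Nat.exists_eq_add_of_lt (lt_of_le_of_ne hγβ hγ)
    rw [show ((γ + d + 1 : ℕ) : ℚ) - γ - 1 = d by push_cast; ring,
      show γ + d + 1 - γ = d + 1 by omega, Ring.choose_natCast, Nat.choose_succ_self,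
      Nat.cast_zero, mul_zero]

theorem stmt3 (p γ β : ℕ) (hγβ : γ ≤ β) (hβp : β ≤ p) :
    ∑ m ∈ Finset.Icc γ β,
      gbinom (-(p : ℚ) - 1) m * gbinom ((p : ℚ) + β) (β - m) * gbinom (m : ℚ) γ
      = if γ = β then gbinom (-(p : ℚ) - 1) β else 0 :=
  stmt3_general p γ β hγβ
end

section
/- Let $\gamma$ be an element of a commutative $\mathbb{Q}$-algebra, $n$ an integer, and $X, Y$ integers with $X \ge 0$ and $Y \ge 1$. Define $H_{\gamma,n}(X,Y) = \sum_{k=0}^{Y-1} \binom{-X}{k}\binom{\gamma+X}{n+X+k}$ and $D_{\gamma,n}(X,Y) = \sum_{k=0}^{X-1} (-1)^{Y+k}\binom{-Y}{k}\binom{\gamma+k}{n+Y+k}$, where all binomial coefficients are generalized binomial coefficients (defined to be $0$ when the bottom argument is negative). Then $H_{\gamma,n}(X,Y) + D_{\gamma,n}(X,Y) = \binom{\gamma}{n}$. -/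
/-- Generalized binomial coefficient `x(x-1)⋯(x-k+1)/k!` for `x` in a
commutative `ℚ`-algebra. -/
noncomputable def gbinomA {R : Type*} [CommRing R] [Algebra ℚ R] (x : R) (k : ℕ) : R :=
  algebraMap ℚ R ((Nat.factorial k : ℚ)⁻¹) * ∏ i ∈ Finset.range k, (x - i)

/-- Generalized binomial coefficient with integer bottom argument, equal to `0`
for negative bottom argument. -/
noncomputable def gbinomAZ {R : Type*} [CommRing R] [Algebra ℚ R] (x : R) (k : ℤ) : R :=
  if k < 0 then 0 else gbinomA x k.toNat

section lems
variable {R : Type*} [CommRing R] [Algebra ℚ R]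

lemma gbinomA_zero (x : R) : gbinomA x 0 = 1 := by
  simp [gbinomA]

lemma fac_inv_succ (k : ℕ) : ((Nat.factorial k : ℚ))⁻¹ =
    ((Nat.factorial (k+1) : ℚ))⁻¹ * ((k:ℚ)+1) := by
  rw [Nat.factorial_succ]
  push_cast
  rw [mul_inv]
  field_simp

lemma gbinomA_pascal (x : R) (k : ℕ) :
    gbinomA x (k+1) = gbinomA (x-1) (k+1) + gbinomA (x-1) k := by
  unfold gbinomA
  have h1 : ∏ i ∈ Finset.range (k+1), (x - i) =
      (∏ i ∈ Finset.range k, (x - 1 - i)) * x := by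
    rw [Finset.prod_range_succ']
    congr 1
    · exact Finset.prod_congr rfl (fun i _ => by push_cast; ring)
    · simp
  rw [h1, Finset.prod_range_succ, fac_inv_succ k, map_mul]
  have : (algebraMap ℚ R) ((k:ℚ)+1) = (k : R) + 1 := by
    push_cast; simp
  rw [this]
  ring

lemma gbinomAZ_pascal (x : R) (m : ℤ) :
    gbinomAZ x m = gbinomAZ (x-1) m + gbinomAZ (x-1) (m-1) := by
  rcases lt_trichotomy m 0 with h | h | h
  · rw [gbinomAZ, if_pos h, gbinomAZ, if_pos h, gbinomAZ, if_pos (by omega)]; ring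
  · subst h
    simp [gbinomAZ, gbinomA_zero]
  · have h1 : m.toNat = (m-1).toNat + 1 := by omega
    rw [gbinomAZ, if_neg (by omega), gbinomAZ, if_neg (by omega), gbinomAZ,
      if_neg (by omega), h1, gbinomA_pascal]

lemma gbinomAZ_coe (x : R) (k : ℕ) : gbinomAZ x (k : ℤ) = gbinomA x k := by
  rw [gbinomAZ, if_neg (by omega), Int.toNat_natCast]

lemma gbinomA_neg_nat (m k : ℕ) :
    gbinomA (-(m:R)) k = (-1)^k * ((m + k - 1).choose k : R) := by
  unfold gbinomA
  have h1 : ∏ i ∈ Finset.range k, (-(m:R) - i) =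
      (-1)^k * (m.ascFactorial k : R) := by
    induction k with
    | zero => simp
    | succ k ih =>
      rw [Finset.prod_range_succ, ih, Nat.ascFactorial_succ]
      push_cast; ring
  rw [h1, Nat.ascFactorial_eq_factorial_mul_choose']
  have hf : ((Nat.factorial k : ℕ) : R) = algebraMap ℚ R ((Nat.factorial k : ℚ)) := by simp
  push_cast
  rw [show (algebraMap ℚ R) ((Nat.factorial k : ℚ))⁻¹ * ((-1:R)^k * ((Nat.factorial k : R) * ((m + k - 1).choose k : R))) = (-1:R)^k * ((m + k - 1).choose k : R) * ((algebraMap ℚ R) ((Nat.factorial k : ℚ))⁻¹ * (Nat.factorial k : R)) by ring, hf, ← map_mul,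
    inv_mul_cancel₀ (by exact_mod_cast Nat.factorial_ne_zero k), map_one, mul_one]

lemma gbinomA_zero_left (k : ℕ) : gbinomA (0:R) k = if k = 0 then 1 else 0 := by
  rcases k with _ | j
  · simp [gbinomA_zero]
  · have h := gbinomA_neg_nat (R := R) 0 (j+1)
    simp only [Nat.cast_zero, neg_zero, Nat.zero_add] at h
    rw [h, Nat.choose_eq_zero_of_lt (by omega)]
    simp

lemma sign_id (x z : ℕ) :
    gbinomA (-((x:R)+1)) z + (-1:R)^(z+1+x) * gbinomA (-((z:R)+1)) x = 0 := by
  have h1 := gbinomA_neg_nat (R := R) (x+1) z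
  have h2 := gbinomA_neg_nat (R := R) (z+1) x
  push_cast at h1 h2
  rw [h1, h2]
  have hc : (x+1+z-1).choose z = (z+1+x-1).choose x := by
    have e1 : x+1+z-1 = x+z := by omega
    have e2 : z+1+x-1 = x+z := by omega
    rw [e1, e2]
    have := Nat.choose_symm (Nat.le_add_right x z)
    rwa [Nat.add_sub_cancel_left] at this
  have hs : (-1:R)^(z+1+x) * (-1:R)^x = -(-1:R)^z := by
    rw [← pow_add, show z+1+x+x = (z+1) + 2*x by ring, pow_add, pow_mul]
    norm_num [pow_succ]
  rw [hc]
  calc (-1:R) ^ z * ((z+1+x-1).choose x : R) +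
        (-1:R) ^ (z + 1 + x) * ((-1:R) ^ x * ((z+1+x-1).choose x : R))
      = (((-1:R)^z) + (-1:R)^(z+1+x) * (-1:R)^x) * ((z+1+x-1).choose x : R) := by ring
    _ = 0 := by rw [hs]; ring

lemma key (γ : R) (n : ℤ) (z : ℕ) (x : ℕ) :
    (∑ k ∈ Finset.range (z+1),
        gbinomAZ (-(x:R)) (k:ℤ) * gbinomAZ (γ + (x:R)) (n + x + k)) +
    (∑ k ∈ Finset.range x,
        (-1:R)^(z+1+k) * gbinomAZ (-((z:R)+1)) (k:ℤ) * gbinomAZ (γ + (k:R)) (n + (z+1) + k))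
      = gbinomAZ γ n := by
  induction x with
  | zero =>
    simp only [Finset.range_zero, Finset.sum_empty, add_zero, Nat.cast_zero, neg_zero]
    have h : ∀ k ∈ Finset.range (z+1),
        gbinomAZ (0:R) (k:ℤ) * gbinomAZ γ (n + k)
          = if k = 0 then gbinomAZ γ n else 0 := by
      intro k _
      rw [gbinomAZ_coe, gbinomA_zero_left]
      rcases eq_or_ne k 0 with rfl | hk
      · simp
      · simp [hk]
    rw [Finset.sum_congr rfl h, Finset.sum_ite_eq' (Finset.range (z+1)) 0]
    simp
  | succ x ih =>
    set c : R := -((x:R)+1) with hc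
    set g : ℕ → R := fun k =>
      gbinomAZ c ((k:ℤ)-1) * gbinomAZ (γ + (x:R)) (n + x + k) with hg
    have hA : ∀ k : ℕ,
        gbinomAZ c (k:ℤ) * gbinomAZ (γ + (x:R) + 1) (n + x + 1 + k)
          = gbinomAZ (-(x:R)) (k:ℤ) * gbinomAZ (γ + (x:R)) (n + x + k)
            + (g (k+1) - g k) := by
      intro k
      have p1 := gbinomAZ_pascal (γ + (x:R) + 1) (n + x + 1 + k)
      rw [show (γ + (x:R) + 1) - 1 = γ + (x:R) by ring,
        show n + (x:ℤ) + 1 + k - 1 = n + x + k by ring] at p1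
      have p2 := gbinomAZ_pascal (-(x:R)) (k:ℤ)
      rw [show -(x:R) - 1 = c by rw [hc]; ring] at p2
      rw [p1, p2]
      simp only [hg]
      rw [show ((k+1:ℕ):ℤ) - 1 = (k:ℤ) by push_cast; ring,
        show n + (x:ℤ) + ((k+1:ℕ):ℤ) = n + x + 1 + k by push_cast; ring]
      ring
    have hH : ∑ k ∈ Finset.range (z+1),
        gbinomAZ c (k:ℤ) * gbinomAZ (γ + (x:R) + 1) (n + x + 1 + k)
          = (∑ k ∈ Finset.range (z+1),
              gbinomAZ (-(x:R)) (k:ℤ) * gbinomAZ (γ + (x:R)) (n + x + k))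
            + (g (z+1) - g 0) := by
      rw [Finset.sum_congr rfl (fun k _ => hA k), Finset.sum_add_distrib,
        Finset.sum_range_sub g]
    have hg0 : g 0 = 0 := by
      simp only [hg]
      rw [show ((0:ℕ):ℤ) - 1 = (-1:ℤ) by norm_num]
      rw [gbinomAZ, if_pos (by omega)]
      ring
    have hgz : g (z+1) + (-1:R)^(z+1+x) * gbinomAZ (-((z:R)+1)) (x:ℤ)
        * gbinomAZ (γ + (x:R)) (n + (z+1) + x) = 0 := by
      simp only [hg]
      rw [show ((z+1:ℕ):ℤ) - 1 = (z:ℤ) by push_cast; ring,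
        show n + (x:ℤ) + ((z+1:ℕ):ℤ) = n + (z+1) + x by push_cast; ring,
        gbinomAZ_coe, gbinomAZ_coe]
      have := sign_id (R := R) x z
      calc gbinomA c z * gbinomAZ (γ + (x:R)) (n + (z+1) + x)
            + (-1:R)^(z+1+x) * gbinomA (-((z:R)+1)) x
              * gbinomAZ (γ + (x:R)) (n + (z+1) + x)
          = (gbinomA (-((x:R)+1)) z + (-1:R)^(z+1+x) * gbinomA (-((z:R)+1)) x)
              * gbinomAZ (γ + (x:R)) (n + (z+1) + x) := by rw [hc]; ring
        _ = 0 := by rw [this]; ring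
    -- rewrite the goal's sums
    have e1 : ∀ k : ℕ, γ + ((x+1:ℕ):R) = γ + (x:R) + 1 := fun _ => by push_cast; ring
    have hcast : (-(((x:ℕ)+1:ℕ):R)) = c := by rw [hc]; push_cast; ring
    calc (∑ k ∈ Finset.range (z+1),
            gbinomAZ (-(((x+1:ℕ)):R)) (k:ℤ) * gbinomAZ (γ + ((x+1:ℕ):R)) (n + (x+1:ℕ) + k)) +
          (∑ k ∈ Finset.range (x+1),
            (-1:R)^(z+1+k) * gbinomAZ (-((z:R)+1)) (k:ℤ) * gbinomAZ (γ + (k:R)) (n + (z+1) + k))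
        = (∑ k ∈ Finset.range (z+1),
            gbinomAZ c (k:ℤ) * gbinomAZ (γ + (x:R) + 1) (n + x + 1 + k)) +
          ((∑ k ∈ Finset.range x,
            (-1:R)^(z+1+k) * gbinomAZ (-((z:R)+1)) (k:ℤ) * gbinomAZ (γ + (k:R)) (n + (z+1) + k))
            + (-1:R)^(z+1+x) * gbinomAZ (-((z:R)+1)) (x:ℤ) * gbinomAZ (γ + (x:R)) (n + (z+1) + x)) := by
          rw [Finset.sum_range_succ (fun k => (-1:R)^(z+1+k) * gbinomAZ (-((z:R)+1)) (k:ℤ) * gbinomAZ (γ + (k:R)) (n + (z+1) + k)) x]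
          congr 1
          apply Finset.sum_congr rfl
          intro k _
          rw [hcast, e1 k, show n + ((x+1:ℕ):ℤ) + k = n + x + 1 + k by push_cast; ring]
      _ = gbinomAZ γ n := by
          rw [hH]
          rw [hg0, sub_zero]
          have : g (z+1) + ((∑ k ∈ Finset.range x,
              (-1:R)^(z+1+k) * gbinomAZ (-((z:R)+1)) (k:ℤ) * gbinomAZ (γ + (k:R)) (n + (z+1) + k))
              + (-1:R)^(z+1+x) * gbinomAZ (-((z:R)+1)) (x:ℤ) * gbinomAZ (γ + (x:R)) (n + (z+1) + x))
              = ∑ k ∈ Finset.range x,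
              (-1:R)^(z+1+k) * gbinomAZ (-((z:R)+1)) (k:ℤ) * gbinomAZ (γ + (k:R)) (n + (z+1) + k) := by
            have h2 := hgz
            linear_combination h2
          linear_combination this + ih

end lems

/-- Lemma A.2: `H_{γ,n}(X,Y) + D_{γ,n}(X,Y) = binom(γ, n)`. -/
theorem stmt6 {R : Type*} [CommRing R] [Algebra ℚ R] (γ : R) (n X Y : ℤ)
    (hX : 0 ≤ X) (hY : 1 ≤ Y) :
    (∑ k ∈ Finset.range Y.toNat,
        gbinomAZ (-(X : R)) (k : ℤ) * gbinomAZ (γ + (X : R)) (n + X + k)) +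
    (∑ k ∈ Finset.range X.toNat,
        (-1 : R) ^ (Y.toNat + k) * gbinomAZ (-(Y : R)) (k : ℤ) *
          gbinomAZ (γ + (k : R)) (n + Y + k))
      = gbinomAZ γ n := by
  lift X to ℕ using hX with x
  lift Y to ℕ using (by omega : (0:ℤ) ≤ Y) with y
  obtain ⟨z, rfl⟩ : ∃ z, y = z + 1 := ⟨y - 1, by omega⟩
  have hkey := key (R := R) γ n z x
  rw [Int.toNat_natCast, Int.toNat_natCast]
  push_cast
  push_cast at hkey
  convert hkey using 2
end

section
/- Let $M$ be a nonzero module over the Virasoro Lie algebra (with basis $\{L_n\}_{n \in \mathbb{Z}} \cup \{C\}$, brackets $[L_m, L_n] = (m-n)L_{m+n} + \delta_{m,-n}\frac{m^3-m}{12} C$, $C$ central), on which the central element $C$ acts as a scalar $c$. If there exists $N > 0$ such that $L_n$ acts as $0$ on $M$ for all $n$ with $|n| \ge N$, then $c = 0$. (In particular, a module over the Virasoro algebra with nonzero central charge cannot be 'bounded' in this sense.) -/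
/-!
If `L n` vanishes for `|n| ≥ N`, then `L 1 = [L (N+1), L (-N)] / (2N+1)` and
`L (-1) = [L N, L (-N-1)] / (2N+1)` vanish, hence so does `L 0 = [L 1, L (-1)] / 2`.
The relation `[L n, L (-n)] = 2n L 0 + (n³ - n)/12 · c` at `n = N + 1 ≥ 2` then reads
`(n³ - n)/12 · c = 0` with `n³ - n ≠ 0`.
-/

def IsVirasoroRep {M : Type*} [AddCommGroup M] [Module ℂ M] (L : ℤ → (M →ₗ[ℂ] M)) (c : ℂ) :
    Prop :=
  ∀ m n : ℤ, L m ∘ₗ L n - L n ∘ₗ L m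
    = ((m : ℂ) - (n : ℂ)) • L (m + n)
      + (if m = -n then (((m : ℂ) ^ 3 - (m : ℂ)) / 12 * c) • (LinearMap.id : M →ₗ[ℂ] M)
         else 0)

namespace IsVirasoroRep

variable {M : Type*} [AddCommGroup M] [Module ℂ M] {L : ℤ → (M →ₗ[ℂ] M)} {c : ℂ}

theorem comm_of_ne_neg (h : IsVirasoroRep L c) {m n : ℤ} (hmn : m ≠ -n) :
    L m ∘ₗ L n - L n ∘ₗ L m = ((m : ℂ) - (n : ℂ)) • L (m + n) := by
  rw [h, if_neg hmn, add_zero]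

theorem comm_neg (h : IsVirasoroRep L c) (n : ℤ) :
    L n ∘ₗ L (-n) - L (-n) ∘ₗ L n
      = (2 * (n : ℂ)) • L 0 + (((n : ℂ) ^ 3 - (n : ℂ)) / 12 * c) • LinearMap.id := by
  rw [h, if_pos (neg_neg n).symm, add_neg_cancel]
  push_cast
  ring_nf

theorem eq_zero_at_add (h : IsVirasoroRep L c) {m n : ℤ} (hm : L m = 0) (hn : L n = 0)
    (hne : m ≠ n) (hmn : m ≠ -n) : L (m + n) = 0 := by
  have hcomm := h.comm_of_ne_neg hmn
  rw [hm, hn, LinearMap.zero_comp, sub_zero, eq_comm, smul_eq_zero] at hcomm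
  refine hcomm.resolve_left (sub_ne_zero.mpr ?_)
  exact_mod_cast hne

theorem eq_zero_at_zero (h : IsVirasoroRep L c) (h₁ : L 1 = 0) (hm₁ : L (-1) = 0) : L 0 = 0 := by
  have hcomm := h.comm_neg 1
  rw [h₁, hm₁, LinearMap.zero_comp, sub_zero] at hcomm
  simpa using hcomm.symm

theorem centralCharge_eq_zero [Nontrivial M] (h : IsVirasoroRep L c) (h₀ : L 0 = 0) {n : ℤ}
    (hn : L n = 0) (hneg : L (-n) = 0) (hcube : (n : ℂ) ^ 3 - n ≠ 0) : c = 0 := by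
  have hcomm := h.comm_neg n
  rw [hn, hneg, h₀, LinearMap.zero_comp, sub_zero, smul_zero, zero_add, eq_comm,
    smul_eq_zero] at hcomm
  have hid : (LinearMap.id : M →ₗ[ℂ] M) ≠ 0 := one_ne_zero
  exact (mul_eq_zero.mp (hcomm.resolve_right hid)).resolve_left
    (div_ne_zero hcube (by norm_num))

end IsVirasoroRep

/-- A module over the Virasoro algebra with central charge `c`, given by operators
`L n` satisfying the Virasoro commutation relations, which is "bounded"
(`L n = 0` for `|n| ≥ N`) must have `c = 0`. -/
theorem stmt12 {M : Type*} [AddCommGroup M] [Module ℂ M] [Nontrivial M]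
    (L : ℤ → (M →ₗ[ℂ] M)) (c : ℂ)
    (hrel : ∀ m n : ℤ, L m ∘ₗ L n - L n ∘ₗ L m
      = ((m : ℂ) - (n : ℂ)) • L (m + n)
        + (if m = -n then (((m : ℂ) ^ 3 - (m : ℂ)) / 12 * c) • (LinearMap.id : M →ₗ[ℂ] M)
           else 0))
    (hbdd : ∃ N : ℤ, 0 < N ∧ ∀ n : ℤ, N ≤ |n| → L n = 0) :
    c = 0 := by
  have hL : IsVirasoroRep L c := hrel
  obtain ⟨N, hN, hvanish⟩ := hbdd
  have hvanish_pm : ∀ n, N ≤ n → L n = 0 ∧ L (-n) = 0 := fun n hn =>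
    ⟨hvanish n (by rw [abs_of_pos (by omega)]; omega),
      hvanish (-n) (by rw [abs_neg, abs_of_pos (by omega)]; omega)⟩
  have h₁ : L 1 = 0 := by
    simpa using hL.eq_zero_at_add (hvanish_pm (N + 1) (by omega)).1 (hvanish_pm N le_rfl).2
      (by omega) (by omega)
  have hm₁ : L (-1) = 0 := by
    simpa using hL.eq_zero_at_add (hvanish_pm N le_rfl).1 (hvanish_pm (N + 1) (by omega)).2
      (by omega) (by omega)
  obtain ⟨hpos, hneg⟩ := hvanish_pm (N + 1) (by omega)
  refine hL.centralCharge_eq_zero (hL.eq_zero_at_zero h₁ hm₁) hpos hneg ?_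
  have hcube : 0 < (N + 1) ^ 3 - (N + 1) := by
    rw [show (N + 1) ^ 3 - (N + 1) = N * (N + 1) * (N + 2) by ring]
    positivity
  exact_mod_cast hcube.ne'
end
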